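/- Let S = diag(s₁,s₂,s₃) with s₁ ≥ s₂ ≥ |s₃| ≥ 0, and let dᵢ(S) be the diagonal entries of the first moment of the matrix Fisher distribution M(S). Then for any pair of distinct indices i, j ∈ {1,2,3}: sᵢ = sⱼ = 0 if and only if dᵢ(S) = dⱼ(S) = 0. -/

import Mathlib

open MeasureTheory Matrix

noncomputable section

/-- The space of real `3 × 3` matrices. -/
abbrev M3 := Matrix (Fin 3) (Fin 3) ℝ

instance : MeasurableSpace M3 := (inferInstance : MeasurableSpace (Fin 3 → Fin 3 → ℝ))

/-- The special orthogonal group `SO(3)`: real `3 × 3` matrices `R` with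
`Rᵀ R = 1` and `det R = 1`. -/
def SO3 : Set M3 := {R | Rᵀ * R = 1 ∧ R.det = 1}

/-- `μ` is the Haar probability measure of the compact group `SO(3)`, viewed as a measure
on the ambient space of `3 × 3` matrices: it is a probability measure carried by `SO3`
which is invariant under left and right translation by elements of `SO3`. -/
structure IsHaarSO3 (μ : Measure M3) : Prop where
  prob : IsProbabilityMeasure μ
  carried : μ SO3ᶜ = 0
  map_left : ∀ U ∈ SO3, Measure.map (fun R => U * R) μ = μ
  map_right : ∀ V ∈ SO3, Measure.map (fun R => R * V) μ = μ

/-- The normalizing constant `c(S)` of the matrix Fisher distribution with diagonal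
parameter `S = diag s`. -/
def cS (μ : Measure M3) (s : Fin 3 → ℝ) : ℝ :=
  ∫ Q, Real.exp ((Matrix.diagonal s * Q).trace) ∂μ

/-- The matrix Fisher density `p_S(Q) = exp(tr(S Q)) / c(S)` with diagonal parameter
`S = diag s`. -/
def pS (μ : Measure M3) (s : Fin 3 → ℝ) (Q : M3) : ℝ :=
  Real.exp ((Matrix.diagonal s * Q).trace) / cS μ s

/-- `dᵢ(S)`: the `i`-th diagonal entry of the first moment `E[Q]` of the matrix Fisher
distribution `M(S)` with `S = diag s`. -/
def dS (μ : Measure M3) (s : Fin 3 → ℝ) (i : Fin 3) : ℝ :=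
  ∫ Q, Q i i * pS μ s Q ∂μ

/-!
For `w = eᵢ + ε eⱼ` with `ε = ±1`, write `α_w(Q) = ⟨w, diag Q⟩`. Conjugating by a transposition
and flipping the signs of two rows are rotations, and a suitable composite `Q ↦ U Q V` acts on
`diag Q` as the reflection in `w^⊥`. Haar invariance under it turns
`I = ∫ α_w(Q) e^{⟨s, diag Q⟩} dμ` into `-∫ α_w(Q) e^{⟨s, diag Q⟩ - ⟨s, w⟩ α_w(Q)} dμ`, so
`⟨s, w⟩ I = ½ ∫ (a - b)(eᵃ - eᵇ) dμ` with `a - b = ⟨s, w⟩ α_w`. The integrand is nonnegative and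
vanishes only where `a = b`; as `α_w` is not a.e. zero, `I = 0` iff `⟨s, w⟩ = sᵢ + ε sⱼ = 0`.
Since `dᵢ + ε dⱼ = I / c(S)`, taking both signs of `ε` gives the theorem.
-/

lemma StrictMono.sub_mul_sub_pos {α : Type*} [Ring α] [LinearOrder α] [IsStrictOrderedRing α]
    {f : α → α} (hf : StrictMono f) {a b : α} (hab : a ≠ b) : 0 < (a - b) * (f a - f b) := by
  rcases hab.lt_or_gt with h | h
  · exact mul_pos_of_neg_of_neg (sub_neg.2 h) (sub_neg.2 (hf h))
  · exact mul_pos (sub_pos.2 h) (sub_pos.2 (hf h))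

lemma StrictMono.sub_mul_sub_nonneg {α : Type*} [Ring α] [LinearOrder α] [IsStrictOrderedRing α]
    {f : α → α} (hf : StrictMono f) (a b : α) : 0 ≤ (a - b) * (f a - f b) := by
  rcases eq_or_ne a b with rfl | hab
  · simp
  · exact (hf.sub_mul_sub_pos hab).le

open Real in
theorem integral_mul_exp_eq_zero_iff_of_antisymm {X : Type*} [MeasurableSpace X]
    {ν : Measure X} {α g : X → ℝ} {c : ℝ} (hα : ¬ ∀ᵐ x ∂ν, α x = 0)
    (hg : Integrable (fun x => α x * exp (g x)) ν)
    (hg' : Integrable (fun x => α x * exp (g x - c * α x)) ν)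
    (hanti : ∫ x, α x * exp (g x - c * α x) ∂ν = -∫ x, α x * exp (g x) ∂ν) :
    ∫ x, α x * exp (g x) ∂ν = 0 ↔ c = 0 := by
  refine ⟨fun hI => ?_, fun hc => by simp only [hc, zero_mul, sub_zero] at hanti; linarith⟩
  by_contra hc
  set F : X → ℝ := fun x => (g x - (g x - c * α x)) * (exp (g x) - exp (g x - c * α x))
  have hF_nonneg : 0 ≤ F := fun x => exp_strictMono.sub_mul_sub_nonneg _ _
  have hF_eq : F = fun x => c * (α x * exp (g x) - α x * exp (g x - c * α x)) := by
    ext x; simp only [F]; ring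
  have hF_int : ∫ x, F x ∂ν = 0 := by
    rw [hF_eq, integral_const_mul, integral_sub hg hg', hanti, hI]; ring
  have hF_ae : F =ᵐ[ν] 0 := (integral_eq_zero_iff_of_nonneg hF_nonneg
    (by rw [hF_eq]; exact (hg.sub hg').const_mul c)).1 hF_int
  refine hα (hF_ae.mono fun x hx => ?_)
  by_contra hx0
  exact (exp_strictMono.sub_mul_sub_pos fun h => mul_ne_zero hc hx0 (by linarith)).ne' hx

lemma Matrix.trace_diagonal_mul {n R : Type*} [Fintype n] [DecidableEq n] [CommSemiring R]
    (s : n → R) (Q : Matrix n n R) : (diagonal s * Q).trace = s ⬝ᵥ diag Q := by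
  simp [trace, dotProduct, diagonal_mul]

lemma Int.cast_units_mul_self {R : Type*} [Ring R] (u : ℤˣ) : ((u : ℤ) : R) * (u : ℤ) = 1 := by
  rw [← Int.cast_mul, Int.units_coe_mul_self, Int.cast_one]

instance : BorelSpace M3 := (inferInstance : BorelSpace (Fin 3 → Fin 3 → ℝ))

namespace SO3

lemma one_mem : (1 : M3) ∈ SO3 := ⟨by simp, by simp⟩

lemma mul_mem {A B : M3} (hA : A ∈ SO3) (hB : B ∈ SO3) : A * B ∈ SO3 :=
  ⟨by rw [transpose_mul, mul_assoc, ← mul_assoc Aᵀ, hA.1, one_mul, hB.1],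
    by rw [det_mul, hA.2, hB.2, one_mul]⟩

lemma diagonal_mem {d : Fin 3 → ℝ} (hd : ∀ l, d l ^ 2 = 1) (hdet : ∏ l, d l = 1) :
    diagonal d ∈ SO3 := by
  refine ⟨?_, by rw [det_diagonal, hdet]⟩
  rw [diagonal_transpose, diagonal_mul_diagonal, ← diagonal_one]
  exact congrArg diagonal (funext fun l => by simpa [sq] using hd l)

lemma sum_sq_apply {Q : M3} (hQ : Q ∈ SO3) (b : Fin 3) : ∑ l, Q l b ^ 2 = 1 := by
  simpa [Matrix.mul_apply, sq] using congrFun (congrFun hQ.1 b) b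

lemma abs_apply_le_one {Q : M3} (hQ : Q ∈ SO3) (a b : Fin 3) : |Q a b| ≤ 1 := by
  rw [← sq_le_one_iff_abs_le_one]
  calc Q a b ^ 2 ≤ ∑ l, Q l b ^ 2 :=
        Finset.single_le_sum (fun l _ => sq_nonneg (Q l b)) (Finset.mem_univ a)
    _ = 1 := sum_sq_apply hQ b

lemma isCompact : IsCompact SO3 := by
  have hclosed : IsClosed SO3 :=
    (isClosed_eq (continuous_id.matrix_transpose.matrix_mul continuous_id) continuous_const).inter
      (isClosed_eq continuous_id.matrix_det continuous_const)
  exact (isCompact_univ_pi fun _ => isCompact_univ_pi fun _ => isCompact_Icc).of_isClosed_subset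
    hclosed fun Q hQ a _ b _ => abs_le.1 (abs_apply_le_one hQ a b)

end SO3

/-- The sign makes the determinant `1`, the dimension being odd. -/
def sgnPermMatrix (σ : Equiv.Perm (Fin 3)) : M3 := ((Equiv.Perm.sign σ : ℤ) : ℝ) • σ.permMatrix ℝ

lemma sgnPermMatrix_mem_SO3 (σ : Equiv.Perm (Fin 3)) : sgnPermMatrix σ ∈ SO3 := by
  have hsq := Int.cast_units_mul_self (R := ℝ) (Equiv.Perm.sign σ)
  refine ⟨?_, ?_⟩
  · rw [sgnPermMatrix, transpose_smul, smul_mul_smul, hsq, one_smul, transpose_permMatrix,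
      ← permMatrix_mul, mul_inv_cancel, permMatrix_one]
  · rw [sgnPermMatrix, det_smul, det_permutation, Fintype.card_fin]
    linear_combination (((Equiv.Perm.sign σ : ℤ) : ℝ) ^ 2 + 1) * hsq

lemma sgnPermMatrix_mul_apply (σ : Equiv.Perm (Fin 3)) (Q : M3) (a b : Fin 3) :
    (sgnPermMatrix σ * Q) a b = (Equiv.Perm.sign σ : ℤ) * Q (σ a) b := by
  simp [sgnPermMatrix, PEquiv.toMatrix_toPEquiv_mul]

lemma sgnPermMatrix_mul_mul_apply (σ : Equiv.Perm (Fin 3)) (Q : M3) (a b : Fin 3) :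
    (sgnPermMatrix σ * Q * sgnPermMatrix σ⁻¹) a b = Q (σ a) (σ b) := by
  simp [sgnPermMatrix, PEquiv.toMatrix_toPEquiv_mul, PEquiv.mul_toMatrix_toPEquiv, ← mul_assoc,
    Int.cast_units_mul_self, Equiv.Perm.inv_def]

def rootVec (i j : Fin 3) (ε : ℝ) : Fin 3 → ℝ := Pi.single i 1 + ε • Pi.single j 1

section rootVec

variable {i j : Fin 3} {ε : ℝ}

lemma rootVec_dotProduct (v : Fin 3 → ℝ) : rootVec i j ε ⬝ᵥ v = v i + ε * v j := by
  simp [rootVec, add_dotProduct]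

lemma dotProduct_rootVec (v : Fin 3 → ℝ) : v ⬝ᵥ rootVec i j ε = v i + ε * v j := by
  rw [dotProduct_comm, rootVec_dotProduct]

lemma rootVec_dotProduct_self (hij : i ≠ j) (hε : ε ^ 2 = 1) :
    rootVec i j ε ⬝ᵥ rootVec i j ε = 2 := by
  rw [rootVec_dotProduct]
  simp [rootVec, hij, hij.symm]
  linear_combination hε

/-- `Q ↦ U * Q * V` conjugates by the transposition of `i` and `j`, then multiplies the `i`-th
and `j`-th rows by `-ε`. -/
lemma exists_diag_mul_mul_eq_reflection (hij : i ≠ j) (hε : ε ^ 2 = 1) :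
    ∃ U ∈ SO3, ∃ V ∈ SO3, ∀ Q : M3,
      diag (U * Q * V) = diag Q - (rootVec i j ε ⬝ᵥ diag Q) • rootVec i j ε := by
  set d : Fin 3 → ℝ := fun l => if l = i ∨ l = j then -ε else 1
  have hd : ∀ l, d l ^ 2 = 1 := fun l => by
    simp only [d]; split_ifs <;> simp [hε]
  have hdet : ∏ l, d l = 1 := by
    fin_cases i <;> fin_cases j <;> simp [d, Fin.prod_univ_three] at hij ⊢ <;>
      linear_combination hε
  refine ⟨diagonal d * sgnPermMatrix (Equiv.swap i j), SO3.mul_mem (SO3.diagonal_mem hd hdet)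
    (sgnPermMatrix_mem_SO3 _), sgnPermMatrix (Equiv.swap i j)⁻¹, sgnPermMatrix_mem_SO3 _,
    fun Q => funext fun l => ?_⟩
  rw [mul_assoc (diagonal d), mul_assoc (diagonal d)]
  simp only [diag_apply, diagonal_mul, sgnPermMatrix_mul_mul_apply, Pi.sub_apply, Pi.smul_apply,
    smul_eq_mul, rootVec_dotProduct]
  by_cases hli : l = i
  · subst hli; simp [d, rootVec, hij]
  by_cases hlj : l = j
  · subst hlj; simp [d, rootVec, hij]; linear_combination (Q l l) * hε
  · simp [d, rootVec, hli, hlj, Equiv.swap_apply_of_ne_of_ne]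

end rootVec

namespace IsHaarSO3

variable {μ : Measure M3}

lemma ae_mem (hμ : IsHaarSO3 μ) : ∀ᵐ Q ∂μ, Q ∈ SO3 :=
  mem_ae_iff.2 hμ.carried

lemma integrable_of_continuous (hμ : IsHaarSO3 μ) {E : Type*} [NormedAddCommGroup E]
    {f : M3 → E} (hf : Continuous f) : Integrable f μ := by
  have := hμ.prob
  rw [← Measure.restrict_eq_self_of_ae_mem hμ.ae_mem]
  exact hf.continuousOn.integrableOn_compact SO3.isCompact

lemma measurePreserving_mul_mul (hμ : IsHaarSO3 μ) {U V : M3} (hU : U ∈ SO3) (hV : V ∈ SO3) :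
    MeasurePreserving (fun Q => U * Q * V) μ μ := by
  have hL : Continuous fun Q : M3 => U * Q := continuous_const.matrix_mul continuous_id
  have hR : Continuous fun Q : M3 => Q * V := continuous_id.matrix_mul continuous_const
  refine ⟨(hR.comp hL).measurable, ?_⟩
  rw [← Function.comp_def (fun Q => Q * V), ← Measure.map_map hR.measurable hL.measurable,
    hμ.map_left U hU, hμ.map_right V hV]

lemma integral_comp_mul_mul (hμ : IsHaarSO3 μ) {U V : M3} (hU : U ∈ SO3) (hV : V ∈ SO3)
    {E : Type*} [NormedAddCommGroup E] [NormedSpace ℝ E] {f : M3 → E}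
    (hf : AEStronglyMeasurable f μ) :
    ∫ Q, f (U * Q * V) ∂μ = ∫ Q, f Q ∂μ := by
  have hφ := hμ.measurePreserving_mul_mul hU hV
  rw [← integral_map hφ.measurable.aemeasurable (by rwa [hφ.map_eq]), hφ.map_eq]

lemma ae_comp_mul_mul (hμ : IsHaarSO3 μ) {U V : M3} (hU : U ∈ SO3) (hV : V ∈ SO3)
    {p : M3 → Prop} (h : ∀ᵐ Q ∂μ, p Q) : ∀ᵐ Q ∂μ, p (U * Q * V) :=
  (hμ.measurePreserving_mul_mul hU hV).quasiMeasurePreserving.ae h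

lemma not_ae_apply_eq_zero (hμ : IsHaarSO3 μ) (a b : Fin 3) : ¬ ∀ᵐ Q ∂μ, Q a b = 0 := by
  intro h
  have := hμ.prob
  have hcol : ∀ᵐ Q ∂μ, ∀ l, Q l b = 0 := by
    refine ae_all_iff.2 fun l => ?_
    filter_upwards [hμ.ae_comp_mul_mul (sgnPermMatrix_mem_SO3 (Equiv.swap a l)) SO3.one_mem h]
      with Q hQ
    simpa [sgnPermMatrix_mul_apply] using hQ
  obtain ⟨Q, hQ, hQ0⟩ := (hμ.ae_mem.and hcol).exists
  simpa [hQ0] using SO3.sum_sq_apply hQ b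

lemma not_ae_rootVec_dotProduct_diag_eq_zero (hμ : IsHaarSO3 μ) {i j : Fin 3} (hij : i ≠ j)
    (ε : ℝ) : ¬ ∀ᵐ Q ∂μ, rootVec i j ε ⬝ᵥ diag Q = 0 := by
  intro h
  set d : Fin 3 → ℝ := fun l => if l = j then 1 else -1
  have hD : diagonal d ∈ SO3 := by
    refine SO3.diagonal_mem (fun l => ?_) ?_
    · simp only [d]; split_ifs <;> norm_num
    · fin_cases j <;> simp [d, Fin.prod_univ_three]
  refine hμ.not_ae_apply_eq_zero i i ?_
  filter_upwards [h, hμ.ae_comp_mul_mul hD SO3.one_mem h] with Q hQ hDQ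
  simp only [mul_one, rootVec_dotProduct, diag_apply, diagonal_mul, d, hij, if_true,
    if_false] at hQ hDQ
  linarith

lemma integral_rootVec_dotProduct_mul_exp_eq_zero_iff (hμ : IsHaarSO3 μ) {i j : Fin 3}
    (hij : i ≠ j) {ε : ℝ} (hε : ε ^ 2 = 1) (s : Fin 3 → ℝ) :
    ∫ Q, rootVec i j ε ⬝ᵥ diag Q * Real.exp (s ⬝ᵥ diag Q) ∂μ = 0 ↔ s i + ε * s j = 0 := by
  obtain ⟨U, hU, V, hV, hrefl⟩ := exists_diag_mul_mul_eq_reflection hij hε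
  set w := rootVec i j ε
  have hint : ∀ c : ℝ,
      Integrable (fun Q => w ⬝ᵥ diag Q * Real.exp (s ⬝ᵥ diag Q - c * w ⬝ᵥ diag Q)) μ :=
    fun c => hμ.integrable_of_continuous (by fun_prop)
  rw [← dotProduct_rootVec]
  refine integral_mul_exp_eq_zero_iff_of_antisymm
    (hμ.not_ae_rootVec_dotProduct_diag_eq_zero hij ε) (by simpa using hint 0) (hint _) ?_
  have hpt : ∀ Q : M3, w ⬝ᵥ diag Q * Real.exp (s ⬝ᵥ diag Q - s ⬝ᵥ w * w ⬝ᵥ diag Q) =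
      -(w ⬝ᵥ diag (U * Q * V) * Real.exp (s ⬝ᵥ diag (U * Q * V))) := fun Q => by
    rw [hrefl, dotProduct_sub, dotProduct_sub, dotProduct_smul, dotProduct_smul,
      rootVec_dotProduct_self hij hε, smul_eq_mul, smul_eq_mul,
      mul_comm (w ⬝ᵥ diag Q) (s ⬝ᵥ w)]
    ring
  rw [integral_congr_ae (.of_forall hpt), integral_neg,
    hμ.integral_comp_mul_mul hU hV (f := fun Q => w ⬝ᵥ diag Q * Real.exp (s ⬝ᵥ diag Q))
      (by simpa using (hint 0).aestronglyMeasurable)]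

lemma cS_pos (hμ : IsHaarSO3 μ) (s : Fin 3 → ℝ) : 0 < cS μ s := by
  have := hμ.prob
  exact integral_exp_pos (hμ.integrable_of_continuous (by fun_prop))

lemma dS_add_mul_eq_div (hμ : IsHaarSO3 μ) (s : Fin 3 → ℝ) (i j : Fin 3) (ε : ℝ) :
    dS μ s i + ε * dS μ s j =
      (∫ Q, rootVec i j ε ⬝ᵥ diag Q * Real.exp (s ⬝ᵥ diag Q) ∂μ) / cS μ s := by
  have hint : ∀ l, Integrable (fun Q => Q l l * pS μ s Q) μ := fun l =>
    hμ.integrable_of_continuous (by unfold pS; fun_prop)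
  rw [dS, dS, ← integral_const_mul, ← integral_add (hint i) ((hint j).const_mul ε),
    ← integral_div]
  refine integral_congr_ae (.of_forall fun Q => ?_)
  simp only [pS, trace_diagonal_mul, rootVec_dotProduct, diag_apply]
  ring

lemma dS_add_mul_eq_zero_iff (hμ : IsHaarSO3 μ) {i j : Fin 3} (hij : i ≠ j) {ε : ℝ}
    (hε : ε ^ 2 = 1) (s : Fin 3 → ℝ) :
    dS μ s i + ε * dS μ s j = 0 ↔ s i + ε * s j = 0 := by
  rw [hμ.dS_add_mul_eq_div, div_eq_zero_iff, or_iff_left (hμ.cS_pos s).ne',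
    hμ.integral_rootVec_dotProduct_mul_exp_eq_zero_iff hij hε]

end IsHaarSO3

theorem s_zero_iff_d_zero_general (μ : Measure M3) (hμ : IsHaarSO3 μ)
    (s : Fin 3 → ℝ)
    (i j : Fin 3) (hij : i ≠ j) :
    (s i = 0 ∧ s j = 0) ↔ (dS μ s i = 0 ∧ dS μ s j = 0) := by
  have hsum_diff : ∀ a b : ℝ, a = 0 ∧ b = 0 ↔ a + 1 * b = 0 ∧ a + -1 * b = 0 := fun a b => by
    constructor <;> rintro ⟨h₁, h₂⟩ <;> constructor <;> linarith
  rw [hsum_diff (s i), hsum_diff (dS μ s i), hμ.dS_add_mul_eq_zero_iff hij (by norm_num),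
    hμ.dS_add_mul_eq_zero_iff hij (by norm_num)]

/-- For `S = diag (s₁,s₂,s₃)` with `s₁ ≥ s₂ ≥ |s₃| ≥ 0` and distinct indices `i ≠ j`:
`sᵢ = sⱼ = 0` iff `dᵢ(S) = dⱼ(S) = 0`. -/
theorem s_zero_iff_d_zero (μ : Measure M3) (hμ : IsHaarSO3 μ)
    (s : Fin 3 → ℝ) (h1 : s 1 ≤ s 0) (h2 : |s 2| ≤ s 1)
    (i j : Fin 3) (hij : i ≠ j) :
    (s i = 0 ∧ s j = 0) ↔ (dS μ s i = 0 ∧ dS μ s j = 0) :=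
  s_zero_iff_d_zero_general μ hμ s i j hij
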